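/- Let B be an H-Galois extension of k with Miyashita–Ulbrich action ▷. Then B with its comodule structure and the action ▷ satisfies braided commutativity: a b = b₍₂₎ (S⁻¹(b₍₁₎) ▷ a) for all a, b ∈ B. -/

import Mathlib

open TensorProduct LinearMap

noncomputable section

variable (k H B : Type) [Field k]
variable [Ring H] [HopfAlgebra k H] [Ring B] [Algebra k B]

/-- The lifted action map `H ⊗ B → B`. -/
def actT (act : H →ₗ[k] B →ₗ[k] B) : H ⊗[k] B →ₗ[k] B := TensorProduct.lift act

/-- `(Δ x) ⊗ (a ⊗ b) ↦ (x₍₁₎ ▷ a)(x₍₂₎ ▷ b)`. -/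
def maMap (act : H →ₗ[k] B →ₗ[k] B) : (H ⊗[k] H) ⊗[k] (B ⊗[k] B) →ₗ[k] B :=
  (LinearMap.mul' k B) ∘ₗ (TensorProduct.map (actT k H B act) (actT k H B act)) ∘ₗ
    (TensorProduct.tensorTensorTensorComm k H H B B).toLinearMap

/-- The Galois map `Γ : B ⊗ B → H ⊗ B`, `x ⊗ y ↦ x₍₁₎ ⊗ x₍₂₎ y`. -/
def galoisMap (coact : B →ₗ[k] H ⊗[k] B) : B ⊗[k] B →ₗ[k] H ⊗[k] B :=
  (TensorProduct.map LinearMap.id (LinearMap.mul' k B))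
    ∘ₗ (TensorProduct.assoc k H B B).toLinearMap
    ∘ₗ (TensorProduct.map coact LinearMap.id)

/-- `(p ⊗ q) ⊗ a ↦ p a q`. -/
def sandwich : (B ⊗[k] B) ⊗[k] B →ₗ[k] B :=
  (LinearMap.mul' k B)
    ∘ₗ (TensorProduct.map LinearMap.id (LinearMap.mul' k B))
    ∘ₗ (TensorProduct.map LinearMap.id (TensorProduct.comm k B B).toLinearMap)
    ∘ₗ (TensorProduct.assoc k B B B).toLinearMap

/-- The Miyashita–Ulbrich action `x ▷ a = Γ⁻¹(x ⊗ 1)⁽¹⁾ a Γ⁻¹(x ⊗ 1)⁽²⁾`. -/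
def muAct (Γinv : H ⊗[k] B →ₗ[k] B ⊗[k] B) : H →ₗ[k] B →ₗ[k] B :=
  (TensorProduct.curry (sandwich k B)).comp
    (Γinv.comp ((TensorProduct.mk k H B).flip 1))

/-- `a ⊗ b ↦ b₍₂₎ (S⁻¹(b₍₁₎) ▷ a)`. -/
def braid (act : H →ₗ[k] B →ₗ[k] B) (Sinv : H →ₗ[k] H) (coact : B →ₗ[k] H ⊗[k] B) :
    B ⊗[k] B →ₗ[k] B :=
  (LinearMap.mul' k B) ∘ₗ (TensorProduct.comm k B B).toLinearMap
    ∘ₗ (TensorProduct.map (actT k H B act) LinearMap.id)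
    ∘ₗ (TensorProduct.map (TensorProduct.map Sinv LinearMap.id) LinearMap.id)
    ∘ₗ (TensorProduct.map (TensorProduct.comm k B H).toLinearMap LinearMap.id)
    ∘ₗ (TensorProduct.assoc k B H B).symm.toLinearMap
    ∘ₗ (TensorProduct.map LinearMap.id coact)

/-!
Write `τ(x) = Γ⁻¹(x ⊗ 1)` for the translation map and consider
`F(x ⊗ y) = (y ⊗ 1) τ(S⁻¹ x)` on `H ⊗ B`. Since `Γ` is multiplicative in its first factor,
`Γ(F(b₍₁₎ ⊗ b₍₂₎)) = b₍₂₎ S⁻¹(b₍₁₎) ⊗ b₍₃₎ = 1 ⊗ b`, using `b₍₂₎ S⁻¹(b₍₁₎) = ε(b) 1`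
(apply `S`, which is antimultiplicative). As `Γ(1 ⊗ b) = 1 ⊗ b` and `Γ` is injective,
`Σ b₍₂₎ τ(S⁻¹ b₍₁₎)⁽¹⁾ ⊗ τ(S⁻¹ b₍₁₎)⁽²⁾ = 1 ⊗ b`. Sandwiching `a` between the two tensor
factors gives `b₍₂₎ (S⁻¹(b₍₁₎) ▷ a) = 1 · a · b`.
-/

open Coalgebra HopfAlgebra

section TwistedMul

variable {R A : Type*} [CommSemiring R] [Semiring A] [Algebra R A]

def twistedMul (f : A →ₗ[R] A) : A ⊗[R] A →ₗ[R] A :=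
  mul' R A ∘ₗ lTensor A f ∘ₗ (TensorProduct.comm R A A).toLinearMap

@[simp]
lemma twistedMul_tmul (f : A →ₗ[R] A) (x y : A) : twistedMul f (x ⊗ₜ[R] y) = y * f x := rfl

end TwistedMul

lemma twistedMul_comp_comul {R A : Type*} [CommSemiring R] [Semiring A] [HopfAlgebra R A]
    {S' : A →ₗ[R] A}
    (h₁ : Function.LeftInverse S' (antipode R)) (h₂ : Function.RightInverse S' (antipode R)) :
    twistedMul S' ∘ₗ comul = Algebra.linearMap R A ∘ₗ counit := by
  have antipode_twistedMul (t : A ⊗[R] A) :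
      antipode R (twistedMul S' t) = mul' R A (lTensor A (antipode R) t) := by
    induction t using TensorProduct.induction_on with
    | zero => simp
    | tmul x y => simp [antipode_mul_antidistrib, h₂ x]
    | add u v hu hv => simp only [map_add, hu, hv]
  ext a
  apply h₁.injective
  rw [comp_apply, antipode_twistedMul, mul_antipode_lTensor_comul_apply, comp_apply,
    Algebra.linearMap_apply, Algebra.algebraMap_eq_smul_one, map_smul, antipode_one]

lemma rTensor_linearMap_eq_one_tmul_lid {R A M : Type*} [CommSemiring R] [Semiring A]
    [Algebra R A] [AddCommMonoid M] [Module R M] (s : R ⊗[R] M) :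
    rTensor M (Algebra.linearMap R A) s = (1 : A) ⊗ₜ[R] TensorProduct.lid R M s := by
  conv_lhs => rw [← (TensorProduct.lid R M).symm_apply_apply s]
  rw [lid_symm_apply, rTensor_tmul, Algebra.linearMap_apply, map_one]

variable {k H B}

lemma sandwich_tmul (p q c : B) : sandwich k B ((p ⊗ₜ[k] q) ⊗ₜ[k] c) = p * (c * q) := by
  simp [sandwich]

lemma sandwich_tmul_one_mul (y c : B) (w : B ⊗[k] B) :
    sandwich k B (((y ⊗ₜ[k] (1 : B)) * w) ⊗ₜ[k] c) = y * sandwich k B (w ⊗ₜ[k] c) := by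
  induction w using TensorProduct.induction_on with
  | zero => simp
  | tmul p q =>
    rw [Algebra.TensorProduct.tmul_mul_tmul, one_mul, sandwich_tmul, sandwich_tmul, mul_assoc]
  | add u v hu hv => rw [mul_add, add_tmul, map_add, hu, hv, add_tmul, map_add, mul_add]

lemma actT_muAct_tmul (Γinv : H ⊗[k] B →ₗ[k] B ⊗[k] B) (x : H) (c : B) :
    actT k H B (muAct k H B Γinv) (x ⊗ₜ[k] c) = sandwich k B (Γinv (x ⊗ₜ[k] 1) ⊗ₜ[k] c) := by
  simp [actT, muAct]

lemma galoisMap_tmul (coact : B →ₗ[k] H ⊗[k] B) (p q : B) :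
    galoisMap k H B coact (p ⊗ₜ[k] q) = coact p * ((1 : H) ⊗ₜ[k] q) := by
  simp only [galoisMap, comp_apply, map_tmul, id_coe, id_eq, LinearEquiv.coe_coe]
  induction coact p using TensorProduct.induction_on with
  | zero => simp
  | tmul x y => simp [Algebra.TensorProduct.tmul_mul_tmul]
  | add u v hu hv => simp only [add_tmul, map_add, add_mul, hu, hv]

lemma galoisMap_one_tmul {coact : B →ₗ[k] H ⊗[k] B} (coact_one : coact 1 = 1) (b : B) :
    galoisMap k H B coact ((1 : B) ⊗ₜ[k] b) = (1 : H) ⊗ₜ[k] b := by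
  rw [galoisMap_tmul, coact_one, one_mul]

lemma galoisMap_tmul_one_mul {coact : B →ₗ[k] H ⊗[k] B}
    (coact_mul : ∀ a b : B, coact (a * b) = coact a * coact b) (y : B) (w : B ⊗[k] B) :
    galoisMap k H B coact ((y ⊗ₜ[k] (1 : B)) * w) = coact y * galoisMap k H B coact w := by
  induction w using TensorProduct.induction_on with
  | zero => simp
  | tmul p q =>
    rw [Algebra.TensorProduct.tmul_mul_tmul, one_mul, galoisMap_tmul, galoisMap_tmul, coact_mul,
      mul_assoc]
  | add u v hu hv => rw [mul_add, map_add, hu, hv, map_add, mul_add]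

def twistedTranslation (Sinv : H →ₗ[k] H) (Γinv : H ⊗[k] B →ₗ[k] B ⊗[k] B) :
    H ⊗[k] B →ₗ[k] B ⊗[k] B :=
  TensorProduct.lift <|
    ((LinearMap.mul k (B ⊗[k] B)).flip ∘ₗ Γinv ∘ₗ (TensorProduct.mk k H B).flip 1 ∘ₗ Sinv).compl₂
      (Algebra.TensorProduct.includeLeft (R := k) (S := k) (B := B)).toLinearMap

@[simp]
lemma twistedTranslation_tmul (Sinv : H →ₗ[k] H) (Γinv : H ⊗[k] B →ₗ[k] B ⊗[k] B) (x : H) (y : B) :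
    twistedTranslation Sinv Γinv (x ⊗ₜ[k] y) = (y ⊗ₜ[k] (1 : B)) * Γinv (Sinv x ⊗ₜ[k] 1) :=
  rfl

lemma galoisMap_twistedTranslation {coact : B →ₗ[k] H ⊗[k] B} (Sinv : H →ₗ[k] H)
    (coact_mul : ∀ a b : B, coact (a * b) = coact a * coact b)
    {Γinv : H ⊗[k] B →ₗ[k] B ⊗[k] B} (hΓ₂ : ∀ w, galoisMap k H B coact (Γinv w) = w)
    (t : H ⊗[k] B) :
    galoisMap k H B coact (twistedTranslation Sinv Γinv t)
      = rTensor B (twistedMul Sinv) ((TensorProduct.assoc k H H B).symm (lTensor H coact t)) := by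
  induction t using TensorProduct.induction_on with
  | zero => simp
  | tmul x y =>
    rw [twistedTranslation_tmul, galoisMap_tmul_one_mul coact_mul, hΓ₂, lTensor_tmul]
    induction coact y using TensorProduct.induction_on with
    | zero => simp
    | tmul h c => simp [Algebra.TensorProduct.tmul_mul_tmul]
    | add u v hu hv => simp only [add_mul, tmul_add, map_add, hu, hv]
  | add u v hu hv => simp only [map_add, hu, hv]


lemma twistedTranslation_coact {coact : B →ₗ[k] H ⊗[k] B} {Sinv : H →ₗ[k] H}
    (hS₁ : Function.LeftInverse Sinv (antipode k)) (hS₂ : Function.RightInverse Sinv (antipode k))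
    (coact_one : coact 1 = 1) (coact_mul : ∀ a b : B, coact (a * b) = coact a * coact b)
    (coact_coassoc : ∀ a : B, rTensor B comul (coact a)
      = (TensorProduct.assoc k H H B).symm (lTensor H coact (coact a)))
    (coact_counit : ∀ a : B, TensorProduct.lid k B (rTensor B counit (coact a)) = a)
    {Γinv : H ⊗[k] B →ₗ[k] B ⊗[k] B} (hΓ₁ : ∀ z, Γinv (galoisMap k H B coact z) = z)
    (hΓ₂ : ∀ w, galoisMap k H B coact (Γinv w) = w) (b : B) :
    twistedTranslation Sinv Γinv (coact b) = (1 : B) ⊗ₜ[k] b := by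
  apply Function.LeftInverse.injective hΓ₁
  rw [galoisMap_twistedTranslation Sinv coact_mul hΓ₂, ← coact_coassoc, ← rTensor_comp_apply,
    twistedMul_comp_comul hS₁ hS₂, rTensor_comp_apply, rTensor_linearMap_eq_one_tmul_lid,
    coact_counit, galoisMap_one_tmul coact_one]

lemma braid_muAct_tmul (Γinv : H ⊗[k] B →ₗ[k] B ⊗[k] B) (Sinv : H →ₗ[k] H)
    (coact : B →ₗ[k] H ⊗[k] B) (a b : B) :
    braid k H B (muAct k H B Γinv) Sinv coact (a ⊗ₜ[k] b)
      = sandwich k B (twistedTranslation Sinv Γinv (coact b) ⊗ₜ[k] a) := by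
  simp only [braid, comp_apply, LinearEquiv.coe_coe, map_tmul, id_coe, id_eq]
  induction coact b using TensorProduct.induction_on with
  | zero => simp
  | tmul x y =>
    simp only [assoc_symm_tmul, LinearEquiv.coe_coe, map_tmul, comm_tmul, id_coe, id_eq, mul'_apply,
      actT_muAct_tmul, twistedTranslation_tmul, sandwich_tmul_one_mul]
  | add u v hu hv => simp only [tmul_add, map_add, add_tmul, hu, hv]

theorem miyashitaUlbrich_braided_commutative_general
    (coact : B →ₗ[k] H ⊗[k] B)
    (Sinv : H →ₗ[k] H)
    (hS₁ : ∀ x : H, Sinv (HopfAlgebra.antipode (R := k) x) = x)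
    (hS₂ : ∀ x : H, HopfAlgebra.antipode (R := k) (Sinv x) = x)
    (coact_one : coact 1 = 1)
    (coact_mul : ∀ a b : B, coact (a * b) = coact a * coact b)
    (coact_coassoc : ∀ a : B,
      (TensorProduct.map Coalgebra.comul LinearMap.id) (coact a)
        = (TensorProduct.assoc k H H B).symm ((TensorProduct.map LinearMap.id coact) (coact a)))
    (coact_counit : ∀ a : B,
      (TensorProduct.lid k B)
        ((TensorProduct.map (Coalgebra.counit (R := k)) LinearMap.id) (coact a)) = a)
    (Γinv : H ⊗[k] B →ₗ[k] B ⊗[k] B)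
    (hΓ₁ : ∀ z : B ⊗[k] B, Γinv (galoisMap k H B coact z) = z)
    (hΓ₂ : ∀ w : H ⊗[k] B, galoisMap k H B coact (Γinv w) = w) :
    ∀ a b : B, a * b = braid k H B (muAct k H B Γinv) Sinv coact (a ⊗ₜ[k] b) := by
  intro a b
  rw [braid_muAct_tmul, twistedTranslation_coact hS₁ hS₂ coact_one coact_mul coact_coassoc
    coact_counit hΓ₁ hΓ₂, sandwich_tmul, one_mul]

/-- Let `B` be an `H`-Galois extension of `k` (with `H` having an
invertible antipode) equipped with the Miyashita–Ulbrich action `▷`.  Then `B` with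
its comodule structure and the action `▷` satisfies braided commutativity:
`a b = b₍₂₎ (S⁻¹(b₍₁₎) ▷ a)` for all `a, b ∈ B`. -/
theorem miyashitaUlbrich_braided_commutative
    (coact : B →ₗ[k] H ⊗[k] B)
    (Sinv : H →ₗ[k] H)
    (hS₁ : ∀ x : H, Sinv (HopfAlgebra.antipode (R := k) x) = x)
    (hS₂ : ∀ x : H, HopfAlgebra.antipode (R := k) (Sinv x) = x)
    (coact_one : coact 1 = 1)
    (coact_mul : ∀ a b : B, coact (a * b) = coact a * coact b)
    (coact_coassoc : ∀ a : B,
      (TensorProduct.map Coalgebra.comul LinearMap.id) (coact a)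
        = (TensorProduct.assoc k H H B).symm ((TensorProduct.map LinearMap.id coact) (coact a)))
    (coact_counit : ∀ a : B,
      (TensorProduct.lid k B)
        ((TensorProduct.map (Coalgebra.counit (R := k)) LinearMap.id) (coact a)) = a)
    (hcoinv : ∀ b : B, coact b = (1 : H) ⊗ₜ[k] b → ∃ c : k, b = c • (1 : B))
    (Γinv : H ⊗[k] B →ₗ[k] B ⊗[k] B)
    (hΓ₁ : ∀ z : B ⊗[k] B, Γinv (galoisMap k H B coact z) = z)
    (hΓ₂ : ∀ w : H ⊗[k] B, galoisMap k H B coact (Γinv w) = w) :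
    ∀ a b : B, a * b = braid k H B (muAct k H B Γinv) Sinv coact (a ⊗ₜ[k] b) :=
  miyashitaUlbrich_braided_commutative_general coact Sinv hS₁ hS₂ coact_one coact_mul coact_coassoc
    coact_counit Γinv hΓ₁ hΓ₂
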